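/- Under global substitutes, let S⊆V be a group that is T-cohesive with substitutes for T⊆A, consider an SRX execution, and for each step t let B_t be the projects selected so far and T_t = {a∈T : g(a) ∩ B_t = ∅}. Let P(k) denote the total cost of the k cheapest projects in T. As long as T_t ≠ ∅ and |A(i) ∩ B_t| < |T| for every i∈S, each voter i∈S has spent at most P(|A(i) ∩ B_t|)/|S| of their initial budget L/n in total over all steps up to t. -/

import Mathlib

open Finset

/-- A voter's preference: a partition of her desired projects into groups of
substitutes, together with a marginal utility function per group
(`margU g j` is the marginal utility of the `j`-th funded project of group `g`). -/
structure VoterPref (A : Type*) [DecidableEq A] where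
  parts : Finset (Finset A)
  margU : Finset A → ℕ → ℝ

namespace VoterPref

variable {A : Type*} [DecidableEq A]

/-- `A(i)` : the set of desired projects of the voter. -/
def desired (v : VoterPref A) : Finset A := v.parts.sup id

/-- Well-formedness: groups are nonempty and pairwise disjoint, and marginal
utilities are nonnegative and nonincreasing. -/
def Valid (v : VoterPref A) : Prop :=
  (∀ g ∈ v.parts, g.Nonempty) ∧
  (∀ g₁ ∈ v.parts, ∀ g₂ ∈ v.parts, g₁ ≠ g₂ → Disjoint g₁ g₂) ∧
  (∀ g ∈ v.parts, ∀ j : ℕ, 0 ≤ v.margU g j) ∧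
  (∀ g ∈ v.parts, ∀ j : ℕ, v.margU g (j + 1) ≤ v.margU g j)

/-- The utility of a bundle `B`:  `u_i(B) = Σ_{g} Σ_{j=1}^{|g∩B|} u_{i,g}(j)`. -/
def util (v : VoterPref A) (B : Finset A) : ℝ :=
  ∑ g ∈ v.parts, ∑ j ∈ Finset.Icc 1 (g ∩ B).card, v.margU g j

/-- Marginal utility of project `p` given the already selected bundle `B`. -/
def margUtil (v : VoterPref A) (B : Finset A) (p : A) : ℝ :=
  v.util (insert p B) - v.util B

/-- `p₁` and `p₂` are substitutes for the voter. -/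
def sameGroup (v : VoterPref A) (p₁ p₂ : A) : Prop :=
  ∃ g ∈ v.parts, p₁ ∈ g ∧ p₂ ∈ g

end VoterPref

/-- A participatory budgeting instance `E = (V, A, cost, L)` together with the
voters' preferences. -/
structure PB (V A : Type*) [DecidableEq A] where
  cost : A → ℝ
  budget : ℝ
  pref : V → VoterPref A

noncomputable section
open scoped Classical

variable {V A : Type*} [Fintype V] [Fintype A] [DecidableEq A]

/-- `S` is `T`-cohesive with substitutes: `S` can afford `T` with its share of
the budget, every voter in `S` desires every project of `T`, and no two
distinct projects of `T` are substitutes for any voter of `S`. -/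
def TCohesiveSub (E : PB V A) (S : Finset V) (T : Finset A) : Prop :=
  (∑ p ∈ T, E.cost p) ≤ (E.budget / (Fintype.card V : ℝ)) * S.card ∧
  (∀ i ∈ S, T ⊆ (E.pref i).desired) ∧
  (∀ i ∈ S, ∀ p₁ ∈ T, ∀ p₂ ∈ T, p₁ ≠ p₂ → ¬ (E.pref i).sameGroup p₁ p₂)

/-- `p` is `q`-affordable given remaining budgets `b` and current utilities `U`. -/
def Affordable (E : PB V A) (U : V → A → ℝ) (b : V → ℝ) (p : A) (q : ℝ) : Prop :=
  0 ≤ q ∧ E.cost p ≤ ∑ i, min (b i) (U i p * q)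

/-- The minimal `q` for which `p` is `q`-affordable (junk value if none exists). -/
def qmin (E : PB V A) (U : V → A → ℝ) (b : V → ℝ) (p : A) : ℝ :=
  sInf {q | Affordable E U b p q}

/-- The set of unselected projects that are `q`-affordable for some `q`. -/
def affordSet (E : PB V A) (U : V → A → ℝ) (b : V → ℝ) (B : Finset A) : Finset A :=
  Finset.univ.filter fun p => p ∉ B ∧ ∃ q, Affordable E U b p q

/-- The project chosen at the current step: among affordable unselected
projects, minimize the minimal `q`, breaking ties by the (lexicographic)
linear order on `A`; `none` if no project is affordable. -/
def choice [LinearOrder A] (E : PB V A) (U : V → A → ℝ) (b : V → ℝ) (B : Finset A) :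
    Option A :=
  if h : (affordSet E U b B).Nonempty then
    some (((affordSet E U b B).filter fun p =>
        qmin E U b p = (affordSet E U b B).inf' h (qmin E U b)).min'
      (by
        obtain ⟨p, hp, hq⟩ := Finset.exists_mem_eq_inf' h (qmin E U b)
        exact ⟨p, Finset.mem_filter.mpr ⟨hp, hq.symm⟩⟩))
  else none

/-- The state (selected bundle, remaining budgets) of the generalized Rule X
after `t` steps, where `Ufun B i p` is the utility voter `i` assigns to project
`p` when the bundle `B` has already been selected. -/
def state [LinearOrder A] (E : PB V A) (Ufun : Finset A → V → A → ℝ) :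
    ℕ → Finset A × (V → ℝ)
  | 0 => (∅, fun _ => E.budget / (Fintype.card V : ℝ))
  | t + 1 =>
    let st := state E Ufun t
    match choice E (Ufun st.1) st.2 st.1 with
    | none => st
    | some p =>
        (insert p st.1,
          fun i => st.2 i - min (st.2 i) (Ufun st.1 i p * qmin E (Ufun st.1) st.2 p))

/-- The output of the generalized Rule X (after `|A|` steps the state is final). -/
def mechOutput [LinearOrder A] (E : PB V A) (Ufun : Finset A → V → A → ℝ) : Finset A :=
  (state E Ufun (Fintype.card A)).1

/-- SRX uses, at every step, the current marginal utilities. -/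
def srxU (E : PB V A) : Finset A → V → A → ℝ := fun B i p => (E.pref i).margUtil B p

/-- The Substitute Rule X mechanism. -/
def SRX [LinearOrder A] (E : PB V A) : Finset A := mechOutput E (srxU E)

/-- Rule X uses, throughout, utility 1 for every desired project. -/
def rxU (E : PB V A) : Finset A → V → A → ℝ :=
  fun _ i p => if p ∈ (E.pref i).desired then 1 else 0

/-- The (original) Rule X mechanism. -/
def RX [LinearOrder A] (E : PB V A) : Finset A := mechOutput E (rxU E)

/-- Global substitutes: all voters share one common partition `P` of the whole
project set, each voter approving a sub-collection of its groups. -/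
def GlobalSubs (E : PB V A) (P : Finset (Finset A)) : Prop :=
  (∀ g ∈ P, g.Nonempty) ∧
  (∀ g₁ ∈ P, ∀ g₂ ∈ P, g₁ ≠ g₂ → Disjoint g₁ g₂) ∧
  P.sup id = Finset.univ ∧
  (∀ i : V, (E.pref i).parts ⊆ P)

end

/-- `T_t`-style set: the projects of `T` such that neither the project nor any
of its substitutes (w.r.t. the common partition `P`) belongs to `B`. -/
def Tleft {A : Type*} [DecidableEq A] (P : Finset (Finset A)) (T B : Finset A) :
    Finset A :=
  T.filter fun a => ∀ g ∈ P, a ∈ g → ∀ b ∈ g, b ∉ B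

/-- `P(k)`: the total cost of the `k` cheapest projects of `T`. -/
noncomputable def cheapestSum {A : Type*} (cost : A → ℝ) (T : Finset A) (k : ℕ) : ℝ :=
  (((T.val.map cost).sort (· ≤ ·)).take k).sum

/-! Induction over the steps of SRX. When a project desired by `i ∈ S` is selected, `i` has
`k < |T|` desired selected projects; since the projects of `T` lie in distinct groups, at most `k`
of them have a selected substitute, so some untouched `a ∈ T` costs at most the `(k+1)`-st
cheapest cost of `T`. Every member of `S` values `a` at `I` and, by the induction hypothesis and
cohesiveness, can still pay `cost a / |S|`; hence `a` is affordable at price `cost a / (I |S|)`,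
the selected project's price is no larger, and `i` pays at most `cost a / |S|`, which is the
increment `(P(k+1) - P(k)) / |S|` of the bound. -/

section RuleX

variable {V A : Type*} [Fintype V] [DecidableEq A]

lemma qmin_nonneg (E : PB V A) (U : V → A → ℝ) (b : V → ℝ) (p : A) : 0 ≤ qmin E U b p :=
  Real.sInf_nonneg fun _ hq => hq.1

lemma qmin_le {E : PB V A} {U : V → A → ℝ} {b : V → ℝ} {p : A} {q : ℝ}
    (hq : Affordable E U b p q) : qmin E U b p ≤ q :=
  csInf_le ⟨0, fun _ hr => hr.1⟩ hq

lemma affordable_of_forall_share_le {E : PB V A} {U : V → A → ℝ} {b : V → ℝ} {p : A} {q : ℝ}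
    {S : Finset V} (hS : S.Nonempty) (hq : 0 ≤ q) (hb : ∀ j, 0 ≤ b j) (hU : ∀ j, 0 ≤ U j p)
    (hshare : ∀ j ∈ S, E.cost p / S.card ≤ min (b j) (U j p * q)) : Affordable E U b p q := by
  refine ⟨hq, ?_⟩
  calc E.cost p = ∑ _j ∈ S, E.cost p / S.card := by
        rw [Finset.sum_const, nsmul_eq_mul]
        field_simp [(Finset.card_pos.mpr hS).ne']
    _ ≤ ∑ j ∈ S, min (b j) (U j p * q) := Finset.sum_le_sum hshare
    _ ≤ ∑ j, min (b j) (U j p * q) := Finset.sum_le_sum_of_subset_of_nonneg S.subset_univ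
        fun j _ _ => le_min (hb j) (mul_nonneg (hU j) hq)

variable [Fintype A] [LinearOrder A]

section Choice

open scoped Classical

variable {E : PB V A} {U : V → A → ℝ} {b : V → ℝ} {B : Finset A} {p : A}

lemma mem_affordSet_of_choice_eq_some (hp : choice E U b B = some p) :
    p ∈ affordSet E U b B ∧ ∀ a ∈ affordSet E U b B, qmin E U b p ≤ qmin E U b a := by
  unfold choice at hp
  split_ifs at hp with hne
  have hpF : p ∈ (affordSet E U b B).filter
      fun p => qmin E U b p = (affordSet E U b B).inf' hne (qmin E U b) := by
    rw [← Option.some.inj hp]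
    exact Finset.min'_mem _ _
  obtain ⟨hpA, hpmin⟩ := Finset.mem_filter.mp hpF
  exact ⟨hpA, fun a ha => hpmin ▸ Finset.inf'_le _ ha⟩

lemma notMem_of_choice_eq_some (hp : choice E U b B = some p) : p ∉ B :=
  (Finset.mem_filter.mp (mem_affordSet_of_choice_eq_some hp).1).2.1

lemma qmin_le_of_choice_eq_some {a : A} {q : ℝ} (hp : choice E U b B = some p) (ha : a ∉ B)
    (haff : Affordable E U b a q) : qmin E U b p ≤ q :=
  ((mem_affordSet_of_choice_eq_some hp).2 a
    (Finset.mem_filter.mpr ⟨Finset.mem_univ a, ha, q, haff⟩)).trans (qmin_le haff)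

end Choice

variable {E : PB V A} {Ufun : Finset A → V → A → ℝ} {t : ℕ}

lemma state_succ_of_choice_eq_none
    (h : choice E (Ufun (state E Ufun t).1) (state E Ufun t).2 (state E Ufun t).1 = none) :
    state E Ufun (t + 1) = state E Ufun t := by
  simp [state, h]

lemma state_succ_of_choice_eq_some {p : A}
    (h : choice E (Ufun (state E Ufun t).1) (state E Ufun t).2 (state E Ufun t).1 = some p) :
    state E Ufun (t + 1) = (insert p (state E Ufun t).1, fun i => (state E Ufun t).2 i -
      min ((state E Ufun t).2 i)
        (Ufun (state E Ufun t).1 i p * qmin E (Ufun (state E Ufun t).1) (state E Ufun t).2 p)) := by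
  simp [state, h]

lemma state_fst_mono : Monotone fun t => (state E Ufun t).1 := by
  refine monotone_nat_of_le_succ fun t => ?_
  cases h : choice E (Ufun (state E Ufun t).1) (state E Ufun t).2 (state E Ufun t).1 with
  | none => rw [state_succ_of_choice_eq_none h]
  | some p => rw [state_succ_of_choice_eq_some h]; exact Finset.subset_insert _ _

lemma state_snd_nonneg (hL : 0 ≤ E.budget) (t : ℕ) (i : V) : 0 ≤ (state E Ufun t).2 i := by
  induction t with
  | zero => exact div_nonneg hL (Nat.cast_nonneg _)
  | succ t ih =>
    cases h : choice E (Ufun (state E Ufun t).1) (state E Ufun t).2 (state E Ufun t).1 with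
    | none => rwa [state_succ_of_choice_eq_none h]
    | some p =>
      rw [state_succ_of_choice_eq_some h]
      exact sub_nonneg.mpr (min_le_left _ _)

end RuleX

namespace VoterPref

variable {A : Type*} [DecidableEq A] {v : VoterPref A} {B : Finset A} {p : A} {g : Finset A}

lemma mem_desired : p ∈ v.desired ↔ ∃ g ∈ v.parts, p ∈ g := by
  simp [desired, Finset.mem_sup]

lemma margUtil_of_mem (hp : p ∈ B) : v.margUtil B p = 0 := by
  rw [margUtil, Finset.insert_eq_self.mpr hp, sub_self]

lemma margUtil_of_notMem_desired (hp : p ∉ v.desired) : v.margUtil B p = 0 := by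
  rw [margUtil, util, util, ← Finset.sum_sub_distrib]
  refine Finset.sum_eq_zero fun g hg => ?_
  rw [Finset.inter_insert_of_notMem fun hpg => hp (mem_desired.mpr ⟨g, hg, hpg⟩), sub_self]

lemma margUtil_of_mem_parts (hv : v.Valid) (hg : g ∈ v.parts) (hpg : p ∈ g) (hpB : p ∉ B) :
    v.margUtil B p = v.margU g ((g ∩ B).card + 1) := by
  rw [margUtil, util, util, ← Finset.sum_sub_distrib, Finset.sum_eq_single_of_mem g hg]
  · rw [Finset.inter_insert_of_mem hpg,
      Finset.card_insert_of_notMem fun h => hpB (Finset.mem_inter.mp h).2,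
      Finset.sum_Icc_succ_top (Nat.le_add_left 1 _), add_sub_cancel_left]
  · intro g' hg' hne
    have hpg' : p ∉ g' := fun h => Finset.disjoint_left.mp (hv.2.1 g' hg' g hg hne) h hpg
    rw [Finset.inter_insert_of_notMem hpg', sub_self]

lemma margUtil_nonneg (hv : v.Valid) (B : Finset A) (p : A) : 0 ≤ v.margUtil B p := by
  by_cases hpB : p ∈ B
  · rw [margUtil_of_mem hpB]
  by_cases hp : p ∈ v.desired
  · obtain ⟨g, hg, hpg⟩ := mem_desired.mp hp
    rw [margUtil_of_mem_parts hv hg hpg hpB]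
    exact hv.2.2.1 g hg _
  · rw [margUtil_of_notMem_desired hp]

lemma margUtil_le {I : ℝ} (hv : v.Valid) (hI : 0 ≤ I) (hfirst : ∀ g ∈ v.parts, v.margU g 1 = I)
    (B : Finset A) (p : A) : v.margUtil B p ≤ I := by
  by_cases hpB : p ∈ B
  · rwa [margUtil_of_mem hpB]
  by_cases hp : p ∈ v.desired
  · obtain ⟨g, hg, hpg⟩ := mem_desired.mp hp
    rw [margUtil_of_mem_parts hv hg hpg hpB, ← hfirst g hg]
    exact antitone_nat_of_succ_le (hv.2.2.2 g hg) (Nat.le_add_left 1 _)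
  · rwa [margUtil_of_notMem_desired hp]

lemma margUtil_of_disjoint {I : ℝ} (hv : v.Valid) (hfirst : ∀ g ∈ v.parts, v.margU g 1 = I)
    (hg : g ∈ v.parts) (hpg : p ∈ g) (hgB : Disjoint g B) : v.margUtil B p = I := by
  rw [margUtil_of_mem_parts hv hg hpg (Finset.disjoint_left.mp hgB hpg),
    Finset.disjoint_iff_inter_eq_empty.mp hgB, Finset.card_empty, hfirst g hg]

end VoterPref

lemma List.Pairwise.succ_le_countP_le_getElem {α : Type*} [LinearOrder α] {l : List α}
    (hl : l.Pairwise (· ≤ ·)) {k : ℕ} (hk : k < l.length) :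
    k + 1 ≤ l.countP (· ≤ l[k]) := by
  have htake : (l.take (k + 1)).countP (· ≤ l[k]) = (l.take (k + 1)).length := by
    refine List.countP_eq_length.mpr fun x hx => ?_
    obtain ⟨j, hj, rfl⟩ := List.mem_iff_getElem.mp hx
    rw [List.length_take] at hj
    simpa [List.getElem_take] using
      hl.rel_get_of_le (a := ⟨j, by omega⟩) (b := ⟨k, hk⟩) (Fin.mk_le_mk.mpr (by omega))
  calc k + 1 = (l.take (k + 1)).length := by rw [List.length_take]; omega
    _ = _ := htake.symm
    _ ≤ _ := (List.take_sublist _ _).countP_le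

section CheapestSum

variable {A : Type*} (cost : A → ℝ) (T : Finset A)

noncomputable def sortedCosts : List ℝ := (T.val.map cost).sort (· ≤ ·)

lemma cheapestSum_eq_sum_take (k : ℕ) :
    cheapestSum cost T k = ((sortedCosts cost T).take k).sum := rfl

lemma length_sortedCosts : (sortedCosts cost T).length = T.card := by
  rw [sortedCosts, Multiset.length_sort, Multiset.card_map, Finset.card_val]

lemma sortedCosts_pairwise : (sortedCosts cost T).Pairwise (· ≤ ·) :=
  Multiset.pairwise_sort _ _

lemma card_filter_cost_le (v : ℝ) :
    (T.filter (cost · ≤ v)).card = (sortedCosts cost T).countP (· ≤ v) := by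
  rw [sortedCosts, ← Multiset.coe_countP, Multiset.sort_eq, Multiset.countP_map]
  rfl

lemma cheapestSum_succ_sub {k : ℕ} (hk : k < T.card) :
    cheapestSum cost T (k + 1) - cheapestSum cost T k =
      (sortedCosts cost T)[k]'((length_sortedCosts cost T).symm ▸ hk) := by
  rw [cheapestSum_eq_sum_take, cheapestSum_eq_sum_take, List.sum_take_succ, add_sub_cancel_left]

lemma cheapestSum_card : cheapestSum cost T T.card = ∑ p ∈ T, cost p := by
  rw [cheapestSum_eq_sum_take, List.take_of_length_le (length_sortedCosts cost T).le,
    ← Multiset.sum_coe, sortedCosts, Multiset.sort_eq]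
  rfl

variable {cost T}

lemma exists_mem_cost_le_cheapestSum_succ_sub [DecidableEq A] {U : Finset A} {k : ℕ}
    (hcard : (T \ U).card ≤ k) (hk : k < T.card) :
    ∃ a ∈ U, cost a ≤ cheapestSum cost T (k + 1) - cheapestSum cost T k := by
  have hk' : k < (sortedCosts cost T).length := (length_sortedCosts cost T).symm ▸ hk
  rw [cheapestSum_succ_sub cost T hk]
  have hcount := (sortedCosts_pairwise cost T).succ_le_countP_le_getElem hk'
  rw [← card_filter_cost_le] at hcount
  by_contra! hexpensive
  have hcheap : T.filter (cost · ≤ (sortedCosts cost T)[k]) ⊆ T \ U := fun a ha => by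
    rw [Finset.mem_filter] at ha
    exact Finset.mem_sdiff.mpr ⟨ha.1, fun haU => (hexpensive a haU).not_ge ha.2⟩
  have := (Finset.card_le_card hcheap).trans hcard
  omega

lemma cheapestSum_mono (hcost : ∀ a ∈ T, 0 ≤ cost a) : Monotone (cheapestSum cost T) :=
  fun _ _ hmn => (List.take_sublist_take_left hmn).sum_le_sum fun x hx => by
    obtain ⟨a, ha, rfl⟩ :=
      Multiset.mem_map.mp ((Multiset.mem_sort _).mp (List.mem_of_mem_take hx))
    exact hcost a ha

lemma cheapestSum_add_succ_sub_le (hcost : ∀ a ∈ T, 0 ≤ cost a) {m k : ℕ} (hm : m < T.card)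
    (hk : k < T.card) :
    cheapestSum cost T m + (cheapestSum cost T (k + 1) - cheapestSum cost T k) ≤
      ∑ p ∈ T, cost p := by
  obtain ⟨n, hn⟩ : ∃ n, T.card = n + 1 := ⟨T.card - 1, by omega⟩
  have hlast : cheapestSum cost T (k + 1) - cheapestSum cost T k ≤
      cheapestSum cost T (n + 1) - cheapestSum cost T n := by
    rw [cheapestSum_succ_sub cost T hk, cheapestSum_succ_sub cost T (by omega)]
    exact (sortedCosts_pairwise cost T).rel_get_of_le (Fin.mk_le_mk.mpr (by omega))
  calc _ ≤ cheapestSum cost T n + (cheapestSum cost T (n + 1) - cheapestSum cost T n) :=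
        add_le_add (cheapestSum_mono hcost (by omega)) hlast
    _ = ∑ p ∈ T, cost p := by rw [add_sub_cancel, ← hn, cheapestSum_card]

end CheapestSum

section Tleft

variable {V A : Type*} [DecidableEq A] {E : PB V A}
  {P : Finset (Finset A)} {T B : Finset A} {a : A} {g : Finset A} {I : ℝ}

lemma GlobalSubs.eq_of_mem [Fintype A] (hglobal : GlobalSubs E P) {g₁ g₂ : Finset A}
    (hg₁ : g₁ ∈ P) (hg₂ : g₂ ∈ P) (ha₁ : a ∈ g₁) (ha₂ : a ∈ g₂) : g₁ = g₂ := by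
  by_contra hne
  exact Finset.disjoint_left.mp (hglobal.2.1 g₁ hg₁ g₂ hg₂ hne) ha₁ ha₂

lemma mem_Tleft : a ∈ Tleft P T B ↔ a ∈ T ∧ ∀ g ∈ P, a ∈ g → ∀ b ∈ g, b ∉ B := by
  rw [Tleft, Finset.mem_filter]

lemma Tleft_subset : Tleft P T B ⊆ T :=
  Finset.filter_subset _ _

lemma disjoint_of_mem_Tleft (ha : a ∈ Tleft P T B) (hg : g ∈ P) (hag : a ∈ g) :
    Disjoint g B :=
  Finset.disjoint_left.mpr ((mem_Tleft.mp ha).2 g hg hag)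

lemma card_sdiff_Tleft_le [Fintype A] (hglobal : GlobalSubs E P) {i : V}
    (hT : T ⊆ (E.pref i).desired)
    (hsep : ∀ p₁ ∈ T, ∀ p₂ ∈ T, p₁ ≠ p₂ → ¬ (E.pref i).sameGroup p₁ p₂) :
    (T \ Tleft P T B).card ≤ ((E.pref i).desired ∩ B).card := by
  refine Finset.card_le_card_of_forall_subsingleton (E.pref i).sameGroup (fun a ha => ?_)
    fun b _ a₁ ha₁ a₂ ha₂ => ?_
  · obtain ⟨haT, haB⟩ := Finset.mem_sdiff.mp ha
    obtain ⟨g, hgP, hag, b, hbg, hbB⟩ : ∃ g ∈ P, a ∈ g ∧ ∃ b ∈ g, b ∈ B := by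
      simpa [mem_Tleft, haT] using haB
    obtain ⟨gi, hgi, hagi⟩ := VoterPref.mem_desired.mp (hT haT)
    obtain rfl := hglobal.eq_of_mem hgP (hglobal.2.2.2 i hgi) hag hagi
    exact ⟨b, Finset.mem_inter.mpr ⟨VoterPref.mem_desired.mpr ⟨g, hgi, hbg⟩, hbB⟩,
      g, hgi, hag, hbg⟩
  · obtain ⟨ha₁T, ⟨g₁, hg₁, ha₁g, hbg₁⟩⟩ := ha₁
    obtain ⟨ha₂T, ⟨g₂, hg₂, ha₂g, hbg₂⟩⟩ := ha₂
    obtain rfl := hglobal.eq_of_mem (hglobal.2.2.2 i hg₁) (hglobal.2.2.2 i hg₂) hbg₁ hbg₂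
    by_contra hne
    exact hsep a₁ (Finset.mem_sdiff.mp ha₁T).1 a₂ (Finset.mem_sdiff.mp ha₂T).1 hne
      ⟨g₁, hg₁, ha₁g, ha₂g⟩

lemma srxU_eq_of_mem_Tleft [Fintype A] (hglobal : GlobalSubs E P) {j : V}
    (hvalid : (E.pref j).Valid)
    (hfirst : ∀ g ∈ (E.pref j).parts, (E.pref j).margU g 1 = I)
    (ha : a ∈ Tleft P T B) (haj : a ∈ (E.pref j).desired) : srxU E B j a = I := by
  obtain ⟨g, hg, hag⟩ := VoterPref.mem_desired.mp haj
  exact VoterPref.margUtil_of_disjoint hvalid hfirst hg hag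
    (disjoint_of_mem_Tleft ha (hglobal.2.2.2 j hg) hag)

end Tleft

section SRX

variable {V A : Type*} [Fintype V] [Fintype A] [DecidableEq A] [LinearOrder A] {E : PB V A}
  {P : Finset (Finset A)} {I : ℝ} {S : Finset V} {T B : Finset A}

lemma srx_payment_le (hcost : ∀ p, 0 < E.cost p) (hvalid : ∀ i, (E.pref i).Valid) (hI : 0 < I)
    (hfirst : ∀ i, ∀ g ∈ (E.pref i).parts, (E.pref i).margU g 1 = I)
    (hglobal : GlobalSubs E P) (hco : TCohesiveSub E S T) {b : V → ℝ} {p : A}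
    (hp : choice E (srxU E B) b B = some p) (hb : ∀ j, 0 ≤ b j)
    (hk : ∀ j ∈ S, ((E.pref j).desired ∩ B).card < T.card)
    (hspent : ∀ j ∈ S, E.budget / Fintype.card V - b j ≤
      cheapestSum E.cost T ((E.pref j).desired ∩ B).card / S.card)
    {i : V} (hi : i ∈ S) :
    min (b i) (srxU E B i p * qmin E (srxU E B) b p) ≤
      (cheapestSum E.cost T (((E.pref i).desired ∩ B).card + 1) -
        cheapestSum E.cost T ((E.pref i).desired ∩ B).card) / S.card := by
  have hS : 0 < (S.card : ℝ) := by exact_mod_cast Finset.card_pos.mpr ⟨i, hi⟩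
  obtain ⟨a, haT', hacost⟩ := exists_mem_cost_le_cheapestSum_succ_sub (cost := E.cost)
    (card_sdiff_Tleft_le (B := B) hglobal (hco.2.1 i hi) (hco.2.2 i hi)) (hk i hi)
  have haT : a ∈ T := Tleft_subset haT'
  have hvalue : ∀ j ∈ S, srxU E B j a = I := fun j hj =>
    srxU_eq_of_mem_Tleft hglobal (hvalid j) (hfirst j) haT' (hco.2.1 j hj haT)
  have haB : a ∉ B := by
    obtain ⟨g, hg, hag⟩ := VoterPref.mem_desired.mp (hco.2.1 i hi haT)
    exact Finset.disjoint_left.mp (disjoint_of_mem_Tleft haT' (hglobal.2.2.2 i hg) hag) hag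
  have hbudget : ∀ j ∈ S, E.cost a / S.card ≤ b j := fun j hj => by
    have hle := cheapestSum_add_succ_sub_le (fun x _ => (hcost x).le) (hk j hj) (hk i hi)
    calc E.cost a / S.card
        ≤ (E.budget / Fintype.card V * S.card -
            cheapestSum E.cost T ((E.pref j).desired ∩ B).card) / S.card := by
          gcongr; linarith [hco.1]
      _ = E.budget / Fintype.card V -
            cheapestSum E.cost T ((E.pref j).desired ∩ B).card / S.card := by
          field_simp
      _ ≤ b j := by linarith [hspent j hj]
  set q := E.cost a / (I * S.card) with hq
  have hq0 : 0 ≤ q := (div_pos (hcost a) (mul_pos hI hS)).le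
  have hIq : I * q = E.cost a / S.card := by rw [hq]; field_simp
  have haff : Affordable E (srxU E B) b a q :=
    affordable_of_forall_share_le ⟨i, hi⟩ hq0 hb
      (fun j => VoterPref.margUtil_nonneg (hvalid j) B a) fun j hj => by
        rw [hvalue j hj, hIq]
        exact le_min (hbudget j hj) le_rfl
  calc min (b i) (srxU E B i p * qmin E (srxU E B) b p)
      ≤ srxU E B i p * qmin E (srxU E B) b p := min_le_right _ _
    _ ≤ I * q := mul_le_mul (VoterPref.margUtil_le (hvalid i) hI.le (hfirst i) B p)
        (qmin_le_of_choice_eq_some hp haB haff) (qmin_nonneg _ _ _ _) hI.le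
    _ = E.cost a / S.card := hIq
    _ ≤ _ := by gcongr

lemma srx_spent_succ_le (hcost : ∀ p, 0 < E.cost p) (hbudget : 0 ≤ E.budget)
    (hvalid : ∀ i, (E.pref i).Valid) (hI : 0 < I)
    (hfirst : ∀ i, ∀ g ∈ (E.pref i).parts, (E.pref i).margU g 1 = I)
    (hglobal : GlobalSubs E P) (hco : TCohesiveSub E S T) {t : ℕ}
    (hk : ∀ j ∈ S, ((E.pref j).desired ∩ (state E (srxU E) t).1).card < T.card)
    (hspent : ∀ j ∈ S, E.budget / Fintype.card V - (state E (srxU E) t).2 j ≤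
      cheapestSum E.cost T ((E.pref j).desired ∩ (state E (srxU E) t).1).card / S.card)
    {i : V} (hi : i ∈ S) :
    E.budget / Fintype.card V - (state E (srxU E) (t + 1)).2 i ≤
      cheapestSum E.cost T ((E.pref i).desired ∩ (state E (srxU E) (t + 1)).1).card / S.card := by
  have hb := state_snd_nonneg (Ufun := srxU E) hbudget t
  cases hp : choice E (srxU E (state E (srxU E) t).1) (state E (srxU E) t).2
      (state E (srxU E) t).1 with
  | none => rw [state_succ_of_choice_eq_none hp]; exact hspent i hi
  | some p =>
    rw [state_succ_of_choice_eq_some hp]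
    dsimp only
    by_cases hpi : p ∈ (E.pref i).desired
    · have hpay := srx_payment_le hcost hvalid hI hfirst hglobal hco hp hb hk hspent hi
      rw [Finset.inter_insert_of_mem hpi, Finset.card_insert_of_notMem
        fun h => notMem_of_choice_eq_some hp (Finset.mem_inter.mp h).2]
      rw [sub_div] at hpay
      linarith [hspent i hi]
    · have hU : srxU E (state E (srxU E) t).1 i p = 0 :=
        VoterPref.margUtil_of_notMem_desired hpi
      rw [Finset.inter_insert_of_notMem hpi, hU, zero_mul, min_eq_right (hb i)]
      linarith [hspent i hi]

end SRX

theorem srx_spending_bound_general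
    {V A : Type*} [Fintype V] [Fintype A] [DecidableEq A] [LinearOrder A]
    (E : PB V A) (P : Finset (Finset A)) (I : ℝ)
    (hcost : ∀ p : A, 0 < E.cost p)
    (hbudget : 0 < E.budget)
    (hvalid : ∀ i : V, (E.pref i).Valid)
    (hI : 0 < I)
    (hfirst : ∀ i : V, ∀ g ∈ (E.pref i).parts, (E.pref i).margU g 1 = I)
    (hglobal : GlobalSubs E P)
    (S : Finset V) (T : Finset A)
    (hco : TCohesiveSub E S T)
    (t : ℕ)
    (hlt : ∀ i ∈ S, ((E.pref i).desired ∩ (state E (srxU E) t).1).card < T.card) :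
    ∀ i ∈ S,
      E.budget / (Fintype.card V : ℝ) - (state E (srxU E) t).2 i ≤
        cheapestSum E.cost T ((E.pref i).desired ∩ (state E (srxU E) t).1).card /
          (S.card : ℝ) := by
  induction t with
  | zero => simp [state, cheapestSum]
  | succ t ih =>
    have hk : ∀ j ∈ S, ((E.pref j).desired ∩ (state E (srxU E) t).1).card < T.card :=
      fun j hj => (Finset.card_le_card (Finset.inter_subset_inter_left
        (state_fst_mono (Nat.le_succ t)))).trans_lt (hlt j hj)
    exact fun i hi => srx_spent_succ_le hcost hbudget.le hvalid hI hfirst hglobal hco hk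
      (ih hk) hi

/-- Under global substitutes, for a `T`-cohesive-with-substitutes group `S` and
an SRX execution with `B_t = (state E (srxU E) t).1` and remaining budgets
`(state E (srxU E) t).2`: as long as `T_t ≠ ∅` and every voter of `S` has fewer
than `|T|` desired selected projects, every voter `i ∈ S` has spent at most
`P(|A(i) ∩ B_t|) / |S|` of her initial budget `L/n`. -/
theorem srx_spending_bound
    {V A : Type*} [Fintype V] [Fintype A] [DecidableEq A] [LinearOrder A]
    (E : PB V A) (P : Finset (Finset A)) (I : ℝ)
    (hV : 0 < Fintype.card V)
    (hcost : ∀ p : A, 0 < E.cost p)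
    (hbudget : 0 < E.budget)
    (hvalid : ∀ i : V, (E.pref i).Valid)
    (hI : 0 < I)
    (hfirst : ∀ i : V, ∀ g ∈ (E.pref i).parts, (E.pref i).margU g 1 = I)
    (hglobal : GlobalSubs E P)
    (S : Finset V) (T : Finset A)
    (hco : TCohesiveSub E S T)
    (t : ℕ)
    (hTt : (Tleft P T (state E (srxU E) t).1).Nonempty)
    (hlt : ∀ i ∈ S, ((E.pref i).desired ∩ (state E (srxU E) t).1).card < T.card) :
    ∀ i ∈ S,
      E.budget / (Fintype.card V : ℝ) - (state E (srxU E) t).2 i ≤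
        cheapestSum E.cost T ((E.pref i).desired ∩ (state E (srxU E) t).1).card /
          (S.card : ℝ) :=
  srx_spending_bound_general E P I hcost hbudget hvalid hI hfirst hglobal S T hco t hlt
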